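/- Let Θ be a nonempty set with a distinguished point θ₀, let B ⊆ Θ be nonempty, and fix k ≥ 1, C > 0, λ̄ ≥ 1. Let ξ ∈ ℝ^k with ‖ξ‖ ≤ C; let h, m : Θ → ℝ^k with sup_{θ∈B}‖m(θ)‖ ≤ C and sup_{θ∈B}‖h(θ) − m(θ)‖ ≤ C; let Σ : Θ×Θ → ℝ^{k×k} be such that Σ(θ,θ) is symmetric with all eigenvalues in [1/λ̄, λ̄] for every θ and ‖Σ(θ,θ₀)‖_op ≤ λ̄ for all θ; write Σ₀ = Σ(θ₀,θ₀). Define Q₁(θ) = (Σ(θ,θ₀)Σ₀^{-1}ξ + h(θ))'Σ(θ,θ)^{-1}(Σ(θ,θ₀)Σ₀^{-1}ξ + h(θ)) and Q₂(θ) = (ξ + m(θ))'Σ₀^{-1}(ξ + m(θ)). Then there exists a constant K depending only on C, λ̄ and k such that |inf_{θ∈B} Q₁(θ) − inf_{θ∈B} Q₂(θ)| ≤ K (sup_{θ∈B}‖h(θ) − m(θ)‖ + sup_{θ∈B}‖Σ(θ,θ) − Σ₀‖_op + sup_{θ∈B}‖Σ(θ,θ₀) − Σ₀‖_op). -/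

import Mathlib

open Matrix

/-- Euclidean norm of a vector in `ℝ^k`. -/
noncomputable def euclNorm {k : ℕ} (x : Fin k → ℝ) : ℝ :=
  Real.sqrt (∑ i, x i ^ 2)

/-- Euclidean operator norm of a `k×k` real matrix. -/
noncomputable def opNorm {k : ℕ} (A : Matrix (Fin k) (Fin k) ℝ) : ℝ :=
  sSup {r : ℝ | ∃ x : Fin k → ℝ, euclNorm x ≤ 1 ∧ r = euclNorm (A.mulVec x)}

/-- The criterion `Q₁(θ) = (Σ(θ,θ₀)Σ₀⁻¹ξ + h(θ))'Σ(θ,θ)⁻¹(Σ(θ,θ₀)Σ₀⁻¹ξ + h(θ))`. -/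
noncomputable def critQ1 {k : ℕ} {Θ : Type*} (θ₀ : Θ) (ξ : Fin k → ℝ)
    (h : Θ → Fin k → ℝ) (S : Θ → Θ → Matrix (Fin k) (Fin k) ℝ) (θ : Θ) : ℝ :=
  ((S θ θ₀ * (S θ₀ θ₀)⁻¹).mulVec ξ + h θ) ⬝ᵥ
    (S θ θ)⁻¹.mulVec ((S θ θ₀ * (S θ₀ θ₀)⁻¹).mulVec ξ + h θ)

/-- The simplified criterion `Q₂(θ) = (ξ + m(θ))'Σ₀⁻¹(ξ + m(θ))`. -/
noncomputable def critQ2 {k : ℕ} {Θ : Type*} (θ₀ : Θ) (ξ : Fin k → ℝ)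
    (m : Θ → Fin k → ℝ) (S : Θ → Θ → Matrix (Fin k) (Fin k) ℝ) (θ : Θ) : ℝ :=
  (ξ + m θ) ⬝ᵥ (S θ₀ θ₀)⁻¹.mulVec (ξ + m θ)

/-! With `v = Σ(θ,θ₀)Σ₀⁻¹ξ + h(θ)` and `w = ξ + m(θ)` the two criteria are `v'Σ(θ,θ)⁻¹v` and
`w'Σ₀⁻¹w`. The resolvent identity `Σ⁻¹ - Σ₀⁻¹ = -Σ⁻¹(Σ - Σ₀)Σ₀⁻¹` and the bound `‖Σ⁻¹‖ ≤ λ̄`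
coming from the eigenvalues `≥ 1/λ̄` control their difference by `‖Σ(θ,θ) - Σ₀‖` and by
`‖v - w‖ ≤ λ̄C‖Σ(θ,θ₀) - Σ₀‖ + ‖h(θ) - m(θ)‖`, uniformly in `θ ∈ B`. A uniform pointwise bound
passes to the infima, which are genuine infima because both criteria are nonnegative. -/

open scoped ComplexOrder

theorem Matrix.IsHermitian.posSemidef_sub_smul_one {n 𝕜 : Type*} [Fintype n] [DecidableEq n]
    [RCLike 𝕜] {A : Matrix n n 𝕜} (hA : A.IsHermitian) {c : ℝ}
    (hc : ∀ i, c ≤ hA.eigenvalues i) : (A - (c : 𝕜) • 1).PosSemidef := by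
  set U : Matrix n n 𝕜 := (hA.eigenvectorUnitary : Matrix n n 𝕜)
  have hshift : A - (c : 𝕜) • 1 =
      U * diagonal (RCLike.ofReal ∘ (hA.eigenvalues - fun _ => c)) * star U := by
    have hU : U * star U = 1 := Unitary.mul_star_self_of_mem hA.eigenvectorUnitary.2
    conv_lhs => rw [hA.spectral_theorem, Unitary.conjStarAlgAut_apply]
    simp only [Function.comp_def, Pi.sub_apply, RCLike.ofReal_sub, ← diagonal_sub,
      ← smul_one_eq_diagonal, mul_sub, sub_mul, mul_smul_comm, mul_one, smul_mul_assoc, hU]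
    rfl
  rw [hshift, IsUnit.posSemidef_star_right_conjugate_iff Unitary.isUnit_coe,
    posSemidef_diagonal_iff]
  simpa using hc

theorem ciInf_sub_ciInf_le {ι : Type*} [Nonempty ι] {f g : ι → ℝ} (hf : BddBelow (Set.range f))
    {ε : ℝ} (h : ∀ i, f i - g i ≤ ε) : (⨅ i, f i) - ⨅ i, g i ≤ ε := by
  rw [sub_le_comm]
  exact le_ciInf fun i => by linarith [ciInf_le hf i, h i]

theorem abs_ciInf_sub_ciInf_le {ι : Type*} [Nonempty ι] {f g : ι → ℝ}
    (hf : BddBelow (Set.range f)) (hg : BddBelow (Set.range g)) {ε : ℝ}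
    (h : ∀ i, |f i - g i| ≤ ε) : |(⨅ i, f i) - ⨅ i, g i| ≤ ε :=
  abs_sub_le_iff.mpr
    ⟨ciInf_sub_ciInf_le hf fun i => (le_abs_self _).trans (h i),
      ciInf_sub_ciInf_le hg fun i => (le_abs_self _).trans (abs_sub_comm (f i) _ ▸ h i)⟩

section EuclNorm

variable {k : ℕ}

theorem euclNorm_eq_norm_toLp (x : Fin k → ℝ) : euclNorm x = ‖WithLp.toLp 2 x‖ := by
  simp [euclNorm, EuclideanSpace.norm_eq]

theorem euclNorm_nonneg (x : Fin k → ℝ) : 0 ≤ euclNorm x := Real.sqrt_nonneg _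

theorem euclNorm_neg (x : Fin k → ℝ) : euclNorm (-x) = euclNorm x := by
  simp [euclNorm]

theorem euclNorm_add_le (x y : Fin k → ℝ) : euclNorm (x + y) ≤ euclNorm x + euclNorm y := by
  simpa only [euclNorm_eq_norm_toLp, WithLp.toLp_add] using norm_add_le _ _

theorem dotProduct_self_eq_euclNorm_sq (x : Fin k → ℝ) : x ⬝ᵥ x = euclNorm x ^ 2 := by
  rw [euclNorm, Real.sq_sqrt (by positivity)]
  simp [dotProduct, sq]

theorem abs_dotProduct_le (x y : Fin k → ℝ) : |x ⬝ᵥ y| ≤ euclNorm x * euclNorm y := by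
  simpa [euclNorm_eq_norm_toLp, EuclideanSpace.inner_eq_star_dotProduct, dotProduct_comm] using
    abs_real_inner_le_norm (WithLp.toLp 2 x) (WithLp.toLp 2 y)

theorem opNorm_eq_norm_toEuclideanCLM (A : Matrix (Fin k) (Fin k) ℝ) :
    opNorm A = ‖toEuclideanCLM (𝕜 := ℝ) A‖ := by
  rw [← ContinuousLinearMap.sSup_unitClosedBall_eq_norm, opNorm]
  congr 1
  ext r
  simp only [Set.mem_ofPred_eq, Set.mem_image, Metric.mem_closedBall, dist_zero_right]
  constructor
  · rintro ⟨x, hx, rfl⟩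
    exact ⟨WithLp.toLp 2 x, by rwa [← euclNorm_eq_norm_toLp], by rw [euclNorm_eq_norm_toLp, toEuclideanCLM_toLp]⟩
  · rintro ⟨x, hx, rfl⟩
    exact ⟨x.ofLp, by rwa [euclNorm_eq_norm_toLp],
      by rw [euclNorm_eq_norm_toLp, ← toEuclideanCLM_toLp, WithLp.toLp_ofLp]⟩

theorem opNorm_nonneg (A : Matrix (Fin k) (Fin k) ℝ) : 0 ≤ opNorm A := by
  rw [opNorm_eq_norm_toEuclideanCLM]
  exact norm_nonneg _

theorem euclNorm_mulVec_le (A : Matrix (Fin k) (Fin k) ℝ) (x : Fin k → ℝ) :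
    euclNorm (A *ᵥ x) ≤ opNorm A * euclNorm x := by
  simpa [opNorm_eq_norm_toEuclideanCLM, euclNorm_eq_norm_toLp] using
    (toEuclideanCLM (𝕜 := ℝ) A).le_opNorm (WithLp.toLp 2 x)

end EuclNorm

section Spectral

variable {k : ℕ} {A : Matrix (Fin k) (Fin k) ℝ} {c : ℝ}

theorem Matrix.IsHermitian.mul_euclNorm_sq_le_dotProduct_mulVec (hA : A.IsHermitian)
    (hc : ∀ i, c ≤ hA.eigenvalues i) (x : Fin k → ℝ) : c * euclNorm x ^ 2 ≤ x ⬝ᵥ A *ᵥ x := by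
  have h := (hA.posSemidef_sub_smul_one hc).dotProduct_mulVec_nonneg x
  rw [star_trivial, sub_mulVec, dotProduct_sub, smul_mulVec, one_mulVec, dotProduct_smul,
    dotProduct_self_eq_euclNorm_sq] at h
  simpa [sub_nonneg] using h

theorem Matrix.IsHermitian.mul_euclNorm_le_euclNorm_mulVec (hA : A.IsHermitian)
    (hc : ∀ i, c ≤ hA.eigenvalues i) (x : Fin k → ℝ) : c * euclNorm x ≤ euclNorm (A *ᵥ x) := by
  have h := (hA.mul_euclNorm_sq_le_dotProduct_mulVec hc x).trans
    ((le_abs_self _).trans (abs_dotProduct_le x (A *ᵥ x)))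
  rcases (euclNorm_nonneg x).eq_or_lt with hx | hx
  · rw [← hx, mul_zero]
    exact euclNorm_nonneg _
  · nlinarith

theorem Matrix.IsHermitian.isUnit_det_of_le_eigenvalues (hA : A.IsHermitian) (hc0 : 0 < c)
    (hc : ∀ i, c ≤ hA.eigenvalues i) : IsUnit A.det :=
  (isUnit_iff_isUnit_det A).mp
    ((hA.posDef_iff_eigenvalues_pos.mpr fun i => hc0.trans_le (hc i)).isUnit)

theorem Matrix.IsHermitian.euclNorm_inv_mulVec_le (hA : A.IsHermitian) (hc0 : 0 < c)
    (hc : ∀ i, c ≤ hA.eigenvalues i) (x : Fin k → ℝ) :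
    euclNorm (A⁻¹ *ᵥ x) ≤ c⁻¹ * euclNorm x := by
  have h := hA.mul_euclNorm_le_euclNorm_mulVec hc (A⁻¹ *ᵥ x)
  rw [mulVec_mulVec, mul_nonsing_inv _ (hA.isUnit_det_of_le_eigenvalues hc0 hc),
    one_mulVec] at h
  rwa [le_inv_mul_iff₀ hc0]

theorem Matrix.PosSemidef.dotProduct_inv_mulVec_self_nonneg (hA : A.PosSemidef)
    (x : Fin k → ℝ) : 0 ≤ x ⬝ᵥ A⁻¹ *ᵥ x := by
  simpa using hA.inv.dotProduct_mulVec_nonneg x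

end Spectral

section Perturbation

variable {k : ℕ} {c : ℝ}

theorem abs_dotProduct_inv_mulVec_sub_le {P Q : Matrix (Fin k) (Fin k) ℝ} (hP : P.IsHermitian)
    (hQ : Q.IsHermitian) (hc0 : 0 < c) (hPc : ∀ i, c ≤ hP.eigenvalues i)
    (hQc : ∀ i, c ≤ hQ.eigenvalues i) (v w : Fin k → ℝ) :
    |v ⬝ᵥ P⁻¹ *ᵥ v - w ⬝ᵥ Q⁻¹ *ᵥ w| ≤
      c⁻¹ ^ 2 * opNorm (P - Q) * euclNorm v ^ 2 +
        c⁻¹ * euclNorm (v - w) * (euclNorm v + euclNorm w) := by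
  have hPinv := hP.euclNorm_inv_mulVec_le hc0 hPc
  have hQinv := hQ.euclNorm_inv_mulVec_le hc0 hQc
  have hresolvent : P⁻¹ *ᵥ v - Q⁻¹ *ᵥ v = -(P⁻¹ *ᵥ ((P - Q) *ᵥ (Q⁻¹ *ᵥ v))) := by
    have hPP : P⁻¹ *ᵥ (P *ᵥ (Q⁻¹ *ᵥ v)) = Q⁻¹ *ᵥ v := by
      rw [mulVec_mulVec, nonsing_inv_mul _ (hP.isUnit_det_of_le_eigenvalues hc0 hPc), one_mulVec]
    have hQQ : Q *ᵥ (Q⁻¹ *ᵥ v) = v := by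
      rw [mulVec_mulVec, mul_nonsing_inv _ (hQ.isUnit_det_of_le_eigenvalues hc0 hQc), one_mulVec]
    rw [sub_mulVec, mulVec_sub, hPP, hQQ, neg_sub]
  have hdiff : euclNorm (P⁻¹ *ᵥ v - Q⁻¹ *ᵥ v) ≤ c⁻¹ * (opNorm (P - Q) * (c⁻¹ * euclNorm v)) := by
    rw [hresolvent, euclNorm_neg]
    refine (hPinv _).trans (mul_le_mul_of_nonneg_left ?_ (inv_nonneg.mpr hc0.le))
    exact (euclNorm_mulVec_le _ _).trans
      (mul_le_mul_of_nonneg_left (hQinv v) (opNorm_nonneg _))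
  have hsplit : v ⬝ᵥ P⁻¹ *ᵥ v - w ⬝ᵥ Q⁻¹ *ᵥ w =
      v ⬝ᵥ (P⁻¹ *ᵥ v - Q⁻¹ *ᵥ v) + (v - w) ⬝ᵥ Q⁻¹ *ᵥ v + w ⬝ᵥ Q⁻¹ *ᵥ (v - w) := by
    simp only [dotProduct_sub, sub_dotProduct, mulVec_sub]
    ring
  rw [hsplit]
  calc _ ≤ |v ⬝ᵥ (P⁻¹ *ᵥ v - Q⁻¹ *ᵥ v)| + |(v - w) ⬝ᵥ Q⁻¹ *ᵥ v| + |w ⬝ᵥ Q⁻¹ *ᵥ (v - w)| :=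
        abs_add_three _ _ _
    _ ≤ euclNorm v * (c⁻¹ * (opNorm (P - Q) * (c⁻¹ * euclNorm v))) +
          euclNorm (v - w) * (c⁻¹ * euclNorm v) + euclNorm w * (c⁻¹ * euclNorm (v - w)) := by
      have hdot {x y : Fin k → ℝ} {b : ℝ} (hy : euclNorm y ≤ b) : |x ⬝ᵥ y| ≤ euclNorm x * b :=
        (abs_dotProduct_le x y).trans (mul_le_mul_of_nonneg_left hy (euclNorm_nonneg x))
      gcongr ?_ + ?_ + ?_
      exacts [hdot hdiff, hdot (hQinv v), hdot (hQinv (v - w))]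
    _ = _ := by ring

end Perturbation

/-- `λ²C + 2C` bounds `‖Σ(θ,θ₀)Σ₀⁻¹ξ + h(θ)‖` and `2C` bounds `‖ξ + m(θ)‖`. -/
def comparisonConstant (C lam : ℝ) : ℝ :=
  lam ^ 2 * (lam ^ 2 * C + 2 * C) ^ 2 + lam * (lam ^ 2 * C + 4 * C) * (lam * C + 1)

theorem comparisonConstant_nonneg {C lam : ℝ} (hC : 0 ≤ C) (hlam : 0 ≤ lam) :
    0 ≤ comparisonConstant C lam := by
  unfold comparisonConstant
  positivity

theorem le_comparisonConstant_mul {C lam Dh DS DS₀ : ℝ} (hC : 0 ≤ C) (hlam : 0 ≤ lam)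
    (hDh : 0 ≤ Dh) (hDS : 0 ≤ DS) (hDS₀ : 0 ≤ DS₀) :
    lam ^ 2 * DS * (lam ^ 2 * C + 2 * C) ^ 2 +
        lam * (lam * C * DS₀ + Dh) * ((lam ^ 2 * C + 2 * C) + 2 * C) ≤
      comparisonConstant C lam * (Dh + DS + DS₀) := by
  rw [← sub_nonneg]
  have hdiff : comparisonConstant C lam * (Dh + DS + DS₀) -
      (lam ^ 2 * DS * (lam ^ 2 * C + 2 * C) ^ 2 +
        lam * (lam * C * DS₀ + Dh) * ((lam ^ 2 * C + 2 * C) + 2 * C)) =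
      lam ^ 2 * (lam ^ 2 * C + 2 * C) ^ 2 * (Dh + DS₀) +
        lam * (lam ^ 2 * C + 4 * C) * (lam * C * Dh + lam * C * DS + DS + DS₀) := by
    unfold comparisonConstant
    ring
  rw [hdiff]
  positivity

section Criteria

variable {k : ℕ} {Θ : Type*} {θ₀ : Θ} {ξ : Fin k → ℝ} {h m : Θ → Fin k → ℝ}
  {S : Θ → Θ → Matrix (Fin k) (Fin k) ℝ}

theorem critQ1_nonneg (hS : (S θ θ).PosSemidef) : 0 ≤ critQ1 θ₀ ξ h S θ :=
  hS.dotProduct_inv_mulVec_self_nonneg _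

theorem critQ2_nonneg (hS₀ : (S θ₀ θ₀).PosSemidef) : 0 ≤ critQ2 θ₀ ξ m S θ :=
  hS₀.dotProduct_inv_mulVec_self_nonneg _

theorem abs_critQ1_sub_critQ2_le {θ : Θ} {C lam : ℝ} (hlam : 0 < lam)
    (hξ : euclNorm ξ ≤ C) (hm : euclNorm (m θ) ≤ C) (hhm : euclNorm (h θ - m θ) ≤ C)
    (hS₀ : (S θ₀ θ₀).IsHermitian) (hS₀eig : ∀ i, lam⁻¹ ≤ hS₀.eigenvalues i)
    (hS : (S θ θ).IsHermitian) (hSeig : ∀ i, lam⁻¹ ≤ hS.eigenvalues i)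
    (hR : opNorm (S θ θ₀) ≤ lam) :
    |critQ1 θ₀ ξ h S θ - critQ2 θ₀ ξ m S θ| ≤ comparisonConstant C lam *
      (euclNorm (h θ - m θ) + opNorm (S θ θ - S θ₀ θ₀) + opNorm (S θ θ₀ - S θ₀ θ₀)) := by
  have hC : 0 ≤ C := (euclNorm_nonneg ξ).trans hξ
  set u := (S θ₀ θ₀)⁻¹ *ᵥ ξ
  set v := (S θ θ₀ * (S θ₀ θ₀)⁻¹) *ᵥ ξ + h θ
  set w := ξ + m θ
  have hS₀u : S θ₀ θ₀ *ᵥ u = ξ := by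
    rw [mulVec_mulVec, mul_nonsing_inv _ (hS₀.isUnit_det_of_le_eigenvalues (inv_pos.2 hlam) hS₀eig),
      one_mulVec]
  have hv_eq : v = S θ θ₀ *ᵥ u + ((h θ - m θ) + m θ) := by
    rw [sub_add_cancel, mulVec_mulVec]
  have hvw_eq : v - w = (S θ θ₀ - S θ₀ θ₀) *ᵥ u + (h θ - m θ) := by
    rw [hv_eq, sub_mulVec, hS₀u]
    simp only [w]
    abel
  have hu : euclNorm u ≤ lam * C := by
    simpa only [inv_inv] using (hS₀.euclNorm_inv_mulVec_le (inv_pos.2 hlam) hS₀eig ξ).trans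
      (mul_le_mul_of_nonneg_left hξ (inv_nonneg.2 (inv_pos.2 hlam).le))
  have hv : euclNorm v ≤ lam ^ 2 * C + 2 * C := by
    have hRu : euclNorm (S θ θ₀ *ᵥ u) ≤ lam * (lam * C) :=
      (euclNorm_mulVec_le _ _).trans (mul_le_mul hR hu (euclNorm_nonneg u) hlam.le)
    rw [hv_eq]
    linarith [euclNorm_add_le (S θ θ₀ *ᵥ u) ((h θ - m θ) + m θ), euclNorm_add_le (h θ - m θ) (m θ)]
  have hw : euclNorm w ≤ 2 * C := by
    linarith [euclNorm_add_le ξ (m θ)]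
  have hvw : euclNorm (v - w) ≤ lam * C * opNorm (S θ θ₀ - S θ₀ θ₀) + euclNorm (h θ - m θ) := by
    rw [hvw_eq, mul_comm (lam * C)]
    exact (euclNorm_add_le _ _).trans (add_le_add_left ((euclNorm_mulVec_le _ _).trans
      (mul_le_mul_of_nonneg_left hu (opNorm_nonneg _))) _)
  calc |critQ1 θ₀ ξ h S θ - critQ2 θ₀ ξ m S θ|
        = |v ⬝ᵥ (S θ θ)⁻¹ *ᵥ v - w ⬝ᵥ (S θ₀ θ₀)⁻¹ *ᵥ w| := rfl
    _ ≤ lam ^ 2 * opNorm (S θ θ - S θ₀ θ₀) * euclNorm v ^ 2 +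
          lam * euclNorm (v - w) * (euclNorm v + euclNorm w) := by
        simpa only [inv_inv] using
          abs_dotProduct_inv_mulVec_sub_le hS hS₀ (inv_pos.2 hlam) hSeig hS₀eig v w
    _ ≤ lam ^ 2 * opNorm (S θ θ - S θ₀ θ₀) * (lam ^ 2 * C + 2 * C) ^ 2 +
          lam * (lam * C * opNorm (S θ θ₀ - S θ₀ θ₀) + euclNorm (h θ - m θ)) *
            ((lam ^ 2 * C + 2 * C) + 2 * C) := by
      have := euclNorm_nonneg v
      have := euclNorm_nonneg w
      have := euclNorm_nonneg (h θ - m θ)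
      have := opNorm_nonneg (S θ θ₀ - S θ₀ θ₀)
      have := opNorm_nonneg (S θ θ - S θ₀ θ₀)
      gcongr
    _ ≤ _ := by
      exact le_comparisonConstant_mul hC hlam.le (euclNorm_nonneg _) (opNorm_nonneg _)
        (opNorm_nonneg _)

end Criteria

theorem stmt_16_general (k : ℕ) (C lam : ℝ) (hlam : 1 ≤ lam) :
    ∃ K : ℝ, ∀ (Θ : Type) (B : Set Θ) (θ₀ : Θ), B.Nonempty →
      ∀ (ξ : Fin k → ℝ) (h m : Θ → Fin k → ℝ) (S : Θ → Θ → Matrix (Fin k) (Fin k) ℝ),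
      euclNorm ξ ≤ C →
      (∀ θ ∈ B, euclNorm (m θ) ≤ C) →
      (∀ θ ∈ B, euclNorm (h θ - m θ) ≤ C) →
      (∀ θ : Θ, ∃ hH : (S θ θ).IsHermitian,
        ∀ i, hH.eigenvalues i ∈ Set.Icc (1 / lam) lam) →
      (∀ θ : Θ, opNorm (S θ θ₀) ≤ lam) →
      ∀ Dh DS DS0 : ℝ,
        (∀ θ ∈ B, euclNorm (h θ - m θ) ≤ Dh) →
        (∀ θ ∈ B, opNorm (S θ θ - S θ₀ θ₀) ≤ DS) →
        (∀ θ ∈ B, opNorm (S θ θ₀ - S θ₀ θ₀) ≤ DS0) →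
        |(⨅ θ : B, critQ1 θ₀ ξ h S θ) - (⨅ θ : B, critQ2 θ₀ ξ m S θ)| ≤
          K * (Dh + DS + DS0) := by
  have hlam₀ : 0 < lam := zero_lt_one.trans_le hlam
  refine ⟨comparisonConstant C lam,
    fun Θ B θ₀ hB ξ h m S hξ hm hhm hS hR Dh DS DS0 hDh hDS hDS0 => ?_⟩
  choose hSH hSeig using hS
  have hlow (θ : Θ) (i : Fin k) : lam⁻¹ ≤ (hSH θ).eigenvalues i := by
    simpa only [one_div] using (hSeig θ i).1
  have hpsd (θ : Θ) : (S θ θ).PosSemidef :=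
    (hSH θ).posSemidef_iff_eigenvalues_nonneg.mpr fun i => (inv_pos.2 hlam₀).le.trans (hlow θ i)
  have : Nonempty B := hB.to_subtype
  refine abs_ciInf_sub_ciInf_le ⟨0, ?_⟩ ⟨0, ?_⟩ fun θ => ?_
  · rintro _ ⟨θ, rfl⟩
    exact critQ1_nonneg (hpsd θ)
  · rintro _ ⟨θ, rfl⟩
    exact critQ2_nonneg (hpsd θ₀)
  calc _ ≤ _ := abs_critQ1_sub_critQ2_le hlam₀ hξ (hm θ θ.2) (hhm θ θ.2) (hSH θ₀) (hlow θ₀)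
        (hSH θ) (hlow θ) (hR θ)
    _ ≤ _ := by
      gcongr
      · exact comparisonConstant_nonneg ((euclNorm_nonneg ξ).trans hξ) hlam₀.le
      exacts [hDh θ θ.2, hDS θ θ.2, hDS0 θ θ.2]

/-- **Comparison of restricted infima of quadratic criteria (proof of Theorem 2, eq.
(note 4)).**  Under the stated bounds on `ξ`, `m`, `h − m` and the eigenvalue/operator-norm
bounds on `Σ`, there is a constant `K = K(C,λ̄,k)` such that
`|inf_{θ∈B} Q₁(θ) − inf_{θ∈B} Q₂(θ)| ≤ K (sup_B ‖h−m‖ + sup_B ‖Σ(θ,θ)−Σ₀‖_op +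
sup_B ‖Σ(θ,θ₀)−Σ₀‖_op)`. -/
theorem stmt_16 (k : ℕ) (hk : 1 ≤ k) (C lam : ℝ) (hC : 0 < C) (hlam : 1 ≤ lam) :
    ∃ K : ℝ, ∀ (Θ : Type) (B : Set Θ) (θ₀ : Θ), B.Nonempty →
      ∀ (ξ : Fin k → ℝ) (h m : Θ → Fin k → ℝ) (S : Θ → Θ → Matrix (Fin k) (Fin k) ℝ),
      euclNorm ξ ≤ C →
      (∀ θ ∈ B, euclNorm (m θ) ≤ C) →
      (∀ θ ∈ B, euclNorm (h θ - m θ) ≤ C) →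
      (∀ θ : Θ, ∃ hH : (S θ θ).IsHermitian,
        ∀ i, hH.eigenvalues i ∈ Set.Icc (1 / lam) lam) →
      (∀ θ : Θ, opNorm (S θ θ₀) ≤ lam) →
      ∀ Dh DS DS0 : ℝ,
        (∀ θ ∈ B, euclNorm (h θ - m θ) ≤ Dh) →
        (∀ θ ∈ B, opNorm (S θ θ - S θ₀ θ₀) ≤ DS) →
        (∀ θ ∈ B, opNorm (S θ θ₀ - S θ₀ θ₀) ≤ DS0) →
        |(⨅ θ : B, critQ1 θ₀ ξ h S θ) - (⨅ θ : B, critQ2 θ₀ ξ m S θ)| ≤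
          K * (Dh + DS + DS0) :=
  stmt_16_general k C lam hlam
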